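/- arXiv:1011.1544 — 2 statements merged into one kernel-verified Lean document; each statement's English description precedes it below -/
import Mathlib

section
/- Let U ⊆ ℝ^m be an open set and let (f, ν) be a frontal on U with values in ℝ^{m+1}. For smooth maps ξ : U → ℝ^{m+1} with ⟨ξ(q), ν(q)⟩ = 0 for all q ∈ U, define D_k ξ := ∂_k ξ − ⟨∂_k ξ, ν⟩ ν (the induced metric connection on the bundle ν^⊥). Then for all smooth ξ, ζ : U → ℝ^{m+1} with ⟨ξ, ν⟩ = ⟨ζ, ν⟩ = 0 everywhere, and all i, j ∈ {1,…,m}, the Gauss equation holds at every point of U: ⟨D_i D_j ξ − D_j D_i ξ, ζ⟩ = ⟨∂_j ν, ξ⟩⟨∂_i ν, ζ⟩ − ⟨∂_j ν, ζ⟩⟨∂_i ν, ξ⟩. -/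
open scoped Matrix

noncomputable section

/-- Partial derivative of a vector-valued map in the `k`-th coordinate direction. -/
def pd {m N : ℕ} (k : Fin m) (f : (Fin m → ℝ) → (Fin N → ℝ)) :
    (Fin m → ℝ) → (Fin N → ℝ) :=
  fun q => fderiv ℝ f q (Pi.single k 1)

/-- The induced metric connection on the normal-complement bundle `ν^⊥`:
`D_k ξ := ∂_k ξ − ⟨∂_k ξ, ν⟩ ν`. -/
def Dconn {m : ℕ} (ν : (Fin m → ℝ) → (Fin (m + 1) → ℝ)) (k : Fin m)
    (ξ : (Fin m → ℝ) → (Fin (m + 1) → ℝ)) : (Fin m → ℝ) → (Fin (m + 1) → ℝ) :=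
  fun q => pd k ξ q - (pd k ξ q ⬝ᵥ ν q) • ν q

section helpers
variable {M N : ℕ} {q : Fin M → ℝ} {A B : (Fin M → ℝ) → (Fin N → ℝ)}

lemma coord_diffAt (hA : DifferentiableAt ℝ A q) (k : Fin N) :
    DifferentiableAt ℝ (fun p => A p k) q :=
  ((ContinuousLinearMap.proj k : (Fin N → ℝ) →L[ℝ] ℝ).differentiableAt).comp q hA

lemma fderiv_coord (hA : DifferentiableAt ℝ A q) (k : Fin N) (w : Fin M → ℝ) :
    fderiv ℝ (fun p => A p k) q w = fderiv ℝ A q w k := by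
  have h : (fun p => A p k) = (ContinuousLinearMap.proj k : (Fin N → ℝ) →L[ℝ] ℝ) ∘ A := rfl
  rw [h, fderiv_comp q (ContinuousLinearMap.proj k).differentiableAt hA]
  simp

lemma dot_contDiffAt {n : WithTop ℕ∞} (hA : ContDiffAt ℝ n A q) (hB : ContDiffAt ℝ n B q) :
    ContDiffAt ℝ n (fun p => A p ⬝ᵥ B p) q := by
  simp only [dotProduct]
  exact ContDiffAt.sum fun k _ => (contDiffAt_pi.mp hA k).mul (contDiffAt_pi.mp hB k)

lemma fderiv_dot (hA : DifferentiableAt ℝ A q) (hB : DifferentiableAt ℝ B q) (w : Fin M → ℝ) :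
    fderiv ℝ (fun p => A p ⬝ᵥ B p) q w
      = fderiv ℝ A q w ⬝ᵥ B q + A q ⬝ᵥ fderiv ℝ B q w := by
  simp only [dotProduct]
  rw [fderiv_fun_sum (A := fun k p => A p k * B p k) (fun k _ => ((coord_diffAt hA k).mul (coord_diffAt hB k) :
    DifferentiableAt ℝ (fun p => A p k * B p k) q))]
  rw [ContinuousLinearMap.sum_apply]
  have h : ∀ k : Fin N, fderiv ℝ (fun p => A p k * B p k) q w
      = fderiv ℝ A q w k * B q k + A q k * fderiv ℝ B q w k := by
    intro k
    rw [fderiv_fun_mul (coord_diffAt hA k) (coord_diffAt hB k)]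
    simp [fderiv_coord hA, fderiv_coord hB]
    ring
  rw [Finset.sum_congr rfl (fun k _ => h k), Finset.sum_add_distrib]

lemma pd_contDiffAt {g : (Fin M → ℝ) → (Fin N → ℝ)} (hg : ContDiffAt ℝ (⊤ : ℕ∞) g q) (k : Fin M) :
    ContDiffAt ℝ (⊤ : ℕ∞) (pd k g) q :=
  (hg.fderiv_right (by simp)).clm_apply contDiffAt_const

lemma pd_pd_symm {g : (Fin M → ℝ) → (Fin N → ℝ)} (hg : ContDiffAt ℝ (⊤ : ℕ∞) g q) (i j : Fin M) :
    pd i (pd j g) q = pd j (pd i g) q := by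
  have hd : DifferentiableAt ℝ (fderiv ℝ g) q :=
    (hg.fderiv_right (m := 1) ((by exact WithTop.coe_le_coe.mpr le_top))).differentiableAt (by simp)
  have key : ∀ a b : Fin M, pd a (pd b g) q
      = fderiv ℝ (fderiv ℝ g) q (Pi.single a 1) (Pi.single b 1) := by
    intro a b
    show fderiv ℝ (fun p => fderiv ℝ g p (Pi.single b 1)) q (Pi.single a 1) = _
    rw [fderiv_clm_apply hd (differentiableAt_const _)]
    simp
  rw [key, key]
  exact (hg.isSymmSndFDerivAt (by simp; exact WithTop.coe_le_coe.mpr le_top)).eq _ _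

end helpers

/-- The Gauss equation for a frontal `(f, ν)` in Euclidean space `ℝ^{m+1}`. -/
theorem gauss_equation_frontal_euclidean {m : ℕ} (U : Set (Fin m → ℝ)) (hU : IsOpen U)
    (f ν : (Fin m → ℝ) → (Fin (m + 1) → ℝ))
    (hf : ContDiffOn ℝ (⊤ : ℕ∞) f U) (hν : ContDiffOn ℝ (⊤ : ℕ∞) ν U)
    (hν1 : ∀ q ∈ U, ν q ⬝ᵥ ν q = 1)
    (htang : ∀ q ∈ U, ∀ k : Fin m, pd k f q ⬝ᵥ ν q = 0)
    (ξ ζ : (Fin m → ℝ) → (Fin (m + 1) → ℝ))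
    (hξ : ContDiffOn ℝ (⊤ : ℕ∞) ξ U) (hζ : ContDiffOn ℝ (⊤ : ℕ∞) ζ U)
    (hξν : ∀ q ∈ U, ξ q ⬝ᵥ ν q = 0) (hζν : ∀ q ∈ U, ζ q ⬝ᵥ ν q = 0)
    (i j : Fin m) (q : Fin m → ℝ) (hq : q ∈ U) :
    (Dconn ν i (Dconn ν j ξ) q - Dconn ν j (Dconn ν i ξ) q) ⬝ᵥ ζ q
      = (pd j ν q ⬝ᵥ ξ q) * (pd i ν q ⬝ᵥ ζ q)
        - (pd j ν q ⬝ᵥ ζ q) * (pd i ν q ⬝ᵥ ξ q) := by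
  have hqU : U ∈ nhds q := hU.mem_nhds hq
  have hξq : ContDiffAt ℝ (⊤ : ℕ∞) ξ q := hξ.contDiffAt hqU
  have hνq : ContDiffAt ℝ (⊤ : ℕ∞) ν q := hν.contDiffAt hqU
  have hνζ : ν q ⬝ᵥ ζ q = 0 := by rw [dotProduct_comm]; exact hζν q hq
  -- differentiating ⟨ξ, ν⟩ = 0 on U
  have horth : ∀ k : Fin m, pd k ξ q ⬝ᵥ ν q = -(ξ q ⬝ᵥ pd k ν q) := by
    intro k
    have h0 : (fun p => ξ p ⬝ᵥ ν p) =ᶠ[nhds q] fun _ => (0 : ℝ) :=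
      Filter.eventuallyEq_of_mem hqU fun p hp => hξν p hp
    have := h0.fderiv_eq (𝕜 := ℝ)
    have h1 : fderiv ℝ (fun p => ξ p ⬝ᵥ ν p) q (Pi.single k 1) = 0 := by
      rw [this, (hasFDerivAt_const (0:ℝ) q).fderiv]; rfl
    rw [fderiv_dot (hξq.differentiableAt (by simp)) (hνq.differentiableAt (by simp))] at h1
    have h2 : pd k ξ q ⬝ᵥ ν q + ξ q ⬝ᵥ pd k ν q = 0 := h1
    linarith
  have main : ∀ a b : Fin m, Dconn ν a (Dconn ν b ξ) q ⬝ᵥ ζ q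
      = pd a (pd b ξ) q ⬝ᵥ ζ q + (ξ q ⬝ᵥ pd b ν q) * (pd a ν q ⬝ᵥ ζ q) := by
    intro a b
    have hpdb : ContDiffAt ℝ (⊤ : ℕ∞) (pd b ξ) q := pd_contDiffAt hξq b
    have hc : ContDiffAt ℝ (⊤ : ℕ∞) (fun p => pd b ξ p ⬝ᵥ ν p) q := dot_contDiffAt hpdb hνq
    have hsmul : DifferentiableAt ℝ (fun p => (pd b ξ p ⬝ᵥ ν p) • ν p) q :=
      (hc.differentiableAt (by simp)).smul (hνq.differentiableAt (by simp))
    have hD : pd a (Dconn ν b ξ) q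
        = pd a (pd b ξ) q
          - ((pd b ξ q ⬝ᵥ ν q) • pd a ν q
              + (fderiv ℝ (fun p => pd b ξ p ⬝ᵥ ν p) q (Pi.single a 1)) • ν q) := by
      show fderiv ℝ (fun p => pd b ξ p - (pd b ξ p ⬝ᵥ ν p) • ν p) q (Pi.single a 1) = _
      rw [fderiv_fun_sub (hpdb.differentiableAt (by simp)) hsmul]
      rw [fderiv_fun_smul (hc.differentiableAt (by simp)) (hνq.differentiableAt (by simp))]
      simp only [ContinuousLinearMap.sub_apply, ContinuousLinearMap.add_apply,
        ContinuousLinearMap.smul_apply, ContinuousLinearMap.smulRight_apply]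
      rfl
    have : Dconn ν a (Dconn ν b ξ) q ⬝ᵥ ζ q = pd a (Dconn ν b ξ) q ⬝ᵥ ζ q := by
      show (pd a (Dconn ν b ξ) q - (pd a (Dconn ν b ξ) q ⬝ᵥ ν q) • ν q) ⬝ᵥ ζ q = _
      rw [sub_dotProduct, smul_dotProduct, hνζ]
      simp
    rw [this, hD, sub_dotProduct, add_dotProduct,
      smul_dotProduct, smul_dotProduct, hνζ, horth b]
    simp only [smul_zero, smul_eq_mul]
    ring
  rw [sub_dotProduct, main i j, main j i, pd_pd_symm hξq i j,
    dotProduct_comm (pd j ν q) (ξ q), dotProduct_comm (pd i ν q) (ξ q),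
    dotProduct_comm (pd j ν q) (ζ q), dotProduct_comm (pd i ν q) (ζ q)]
  ring
end
end

section
/- Let m ≥ 2, let U ⊆ ℝ^m be open, let (f, ν) be a front on U with values in ℝ^{m+1}, and let p ∈ U be an A₂-point of f. Suppose there exist an open neighborhood V ⊆ U of p and a constant C > 0 such that |K^ext(X, Y)(q)| ≤ C for every q ∈ V∖Σ and every pair of linearly independent vectors X, Y ∈ ℝ^m. Then the second fundamental form of f vanishes at p: II_p(X, Y) = 0 for all X, Y ∈ ℝ^m. -/
open scoped Matrix
open Filter Topology
set_option maxHeartbeats 1000000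

noncomputable section

/- ========== auxiliary lemmas ========== -/

lemma clm_apply_eq_sum {m N : ℕ} (L : (Fin m → ℝ) →L[ℝ] (Fin N → ℝ)) (X : Fin m → ℝ) :
    L X = ∑ k, X k • L (Pi.single k 1) := by
  have hX : X = ∑ k, X k • (Pi.single k 1 : Fin m → ℝ) := by
    funext j
    simp [Finset.sum_apply, Pi.single_apply]
  calc L X = L (∑ k, X k • (Pi.single k 1 : Fin m → ℝ)) := by rw [← hX]
    _ = ∑ k, X k • L (Pi.single k 1) := by
        rw [map_sum]
        exact Finset.sum_congr rfl fun k _ => by rw [map_smul]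

lemma hasDerivAt_dotProduct {N : ℕ} {F G : ℝ → (Fin N → ℝ)} {F' G' : Fin N → ℝ} {t : ℝ}
    (hF : HasDerivAt F F' t) (hG : HasDerivAt G G' t) :
    HasDerivAt (fun s => F s ⬝ᵥ G s) (F' ⬝ᵥ G t + F t ⬝ᵥ G') t := by
  have h := HasDerivAt.fun_sum (u := Finset.univ)
    (fun i _ => ((hasDerivAt_pi.1 hF i).mul (hasDerivAt_pi.1 hG i)))
  refine h.congr_deriv ?_ <;>
    simp [dotProduct, Finset.sum_add_distrib]

lemma hasDerivAt_line {m : ℕ} {𝔽 : Type*} [NormedAddCommGroup 𝔽] [NormedSpace ℝ 𝔽]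
    {g : (Fin m → ℝ) → 𝔽} {p η : Fin m → ℝ} (hg : DifferentiableAt ℝ g p) :
    HasDerivAt (fun t : ℝ => g (p + t • η)) (fderiv ℝ g p η) 0 := by
  have hline : HasDerivAt (fun t : ℝ => p + t • η) η 0 := by
    simpa using ((hasDerivAt_id (0:ℝ)).smul_const η).const_add p
  have h0 : (fun t : ℝ => p + t • η) 0 = p := by simp
  have hg' : HasFDerivAt g (fderiv ℝ g p) ((fun t : ℝ => p + t • η) 0) := by
    rw [h0]; exact hg.hasFDerivAt
  exact hg'.comp_hasDerivAt 0 hline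

def detCM (n : ℕ) : ContinuousMultilinearMap ℝ (fun _ : Fin n => (Fin n → ℝ)) ℝ where
  toMultilinearMap :=
    (Matrix.detRowAlternating : (Fin n → ℝ) [⋀^Fin n]→ₗ[ℝ] ℝ).toMultilinearMap
  cont := by
    change Continuous fun x : Fin n → (Fin n → ℝ) => Matrix.det (Matrix.of x)
    simp only [Matrix.det_apply']
    exact continuous_finset_sum _ fun σ _ =>
      continuous_const.mul (continuous_finset_prod _ fun i _ =>
        (continuous_apply i).comp (continuous_apply (σ i)))

lemma detCM_update (n : ℕ) (x : Fin n → (Fin n → ℝ)) (i : Fin n) (v : Fin n → ℝ) :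
    detCM n (Function.update x i v) = Matrix.det (Matrix.updateRow (Matrix.of x) i v) := rfl

lemma sum_dotProduct' {N : ℕ} {ι : Type*} (s : Finset ι) (f : ι → (Fin N → ℝ)) (v : Fin N → ℝ) :
    (∑ i ∈ s, f i) ⬝ᵥ v = ∑ i ∈ s, f i ⬝ᵥ v := by
  simp only [dotProduct, Finset.sum_apply, Finset.sum_mul]
  exact Finset.sum_comm

lemma denom_ne_zero {N : ℕ} {u v : Fin N → ℝ} (hu : u ≠ 0)
    (h : ∀ c d : ℝ, c • u + d • v = 0 → c = 0 ∧ d = 0) :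
    (u ⬝ᵥ u) * (v ⬝ᵥ v) - (u ⬝ᵥ v) ^ 2 ≠ 0 := by
  intro hd
  set z := (u ⬝ᵥ u) • v - (u ⬝ᵥ v) • u with hzdef
  have hz : z ⬝ᵥ z = (u ⬝ᵥ u) * ((u ⬝ᵥ u) * (v ⬝ᵥ v) - (u ⬝ᵥ v) ^ 2) := by
    simp only [hzdef, sub_dotProduct, dotProduct_sub, smul_dotProduct,
      dotProduct_smul, smul_eq_mul, dotProduct_comm v u]
    ring
  rw [hd, mul_zero] at hz
  have hz0 : z = 0 := dotProduct_self_eq_zero.mp hz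
  have hcomb : (-(u ⬝ᵥ v)) • u + (u ⬝ᵥ u) • v = 0 := by
    rw [neg_smul, add_comm, ← sub_eq_add_neg, ← hzdef]
    exact hz0
  have huu : u ⬝ᵥ u = 0 := (h _ _ hcomb).2
  exact hu (dotProduct_self_eq_zero.mp huu)

lemma det_update_sum_eq_zero {m : ℕ} (rows : Fin m → (Fin (m+1) → ℝ)) (nu : Fin (m+1) → ℝ)
    (η : Fin m → ℝ) (Bk : Fin m → (Fin (m+1) → ℝ)) (w : Fin (m+1) → ℝ)
    (hrel : ∑ k, η k • rows k = 0)
    (j : Fin m) (hj : η j ≠ 0)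
    (hwrow : ∀ k, rows k ⬝ᵥ w = 0) (hwnu : nu ⬝ᵥ w = 0)
    (hwb : (∑ k, η k • Bk k) ⬝ᵥ w = 0) (hwne : w ≠ 0) :
    (∑ k : Fin m,
        Matrix.det (Matrix.updateRow (Matrix.of (Fin.snoc rows nu)) (Fin.castSucc k) (Bk k)))
      + Matrix.det (Matrix.updateRow (Matrix.of (Fin.snoc rows nu)) (Fin.last m) w) = 0 := by
  set M : Matrix (Fin (m+1)) (Fin (m+1)) ℝ := Matrix.of (Fin.snoc rows nu) with hM
  have hMrow : ∀ k : Fin m, M (Fin.castSucc k) = rows k := fun k => by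
    funext c; simp [hM]
  have hMlast : M (Fin.last m) = nu := by funext c; simp [hM]
  have hA : Matrix.det (Matrix.updateRow M (Fin.last m) w) = 0 := by
    rw [← Matrix.exists_vecMul_eq_zero_iff]
    refine ⟨Fin.snoc η 0, ?_, ?_⟩
    · intro h
      apply hj
      have := congrFun h (Fin.castSucc j)
      simpa [Fin.snoc_castSucc] using this
    · funext c
      have h1 : (Fin.snoc η 0 ᵥ* Matrix.updateRow M (Fin.last m) w) c
          = ∑ i, (Fin.snoc η 0 : Fin (m+1) → ℝ) i * Matrix.updateRow M (Fin.last m) w i c := by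
        simp [Matrix.vecMul, dotProduct]
      rw [h1, Fin.sum_univ_castSucc]
      have h2 : ∀ k : Fin m, Matrix.updateRow M (Fin.last m) w (Fin.castSucc k) c
          = rows k c := fun k => by
        rw [Matrix.updateRow_ne (Fin.castSucc_lt_last k).ne, hMrow k]
      simp only [Fin.snoc_castSucc, Fin.snoc_last, h2, zero_mul, add_zero]
      have := congrFun hrel c
      simpa [Finset.sum_apply, smul_eq_mul] using this
  have key : ∀ k : Fin m, η j * Matrix.det (Matrix.updateRow M (Fin.castSucc k) (Bk k))
      = η k * Matrix.det (Matrix.updateRow M (Fin.castSucc j) (Bk k)) := by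
    intro k
    by_cases hkj : k = j
    · subst hkj; rfl
    · set P := Matrix.updateRow M (Fin.castSucc k) (Bk k) with hP
      have hckj : Fin.castSucc j ≠ Fin.castSucc k := by
        intro h; exact hkj (Fin.castSucc_inj.mp h).symm
      have hPj : P (Fin.castSucc j) = rows j := by
        rw [hP, Matrix.updateRow_ne hckj, hMrow]
      have e1 : η j * P.det = Matrix.det (Matrix.updateRow P (Fin.castSucc j) (η j • rows j)) := by
        rw [Matrix.det_updateRow_smul, ← hPj, Matrix.updateRow_eq_self]
      have hsum : η j • rows j = ∑ l ∈ Finset.univ.erase j, (-η l) • rows l := by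
        have h0 := hrel
        rw [← Finset.add_sum_erase _ _ (Finset.mem_univ j)] at h0
        have : η j • rows j = -∑ l ∈ Finset.univ.erase j, η l • rows l := by
          rw [eq_neg_iff_add_eq_zero]; exact h0
        rw [this, ← Finset.sum_neg_distrib]
        exact Finset.sum_congr rfl fun l _ => (neg_smul _ _).symm
      have e2 : Matrix.det (Matrix.updateRow P (Fin.castSucc j) (η j • rows j))
          = ∑ l ∈ Finset.univ.erase j,
              (-η l) * Matrix.det (Matrix.updateRow P (Fin.castSucc j) (rows l)) := by
        rw [hsum]
        have hms := (Matrix.detRowAlternating :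
            (Fin (m+1) → ℝ) [⋀^Fin (m+1)]→ₗ[ℝ] ℝ).toMultilinearMap.map_update_sum
          (Finset.univ.erase j) (Fin.castSucc j) (fun l => (-η l) • rows l) P
        rw [show Matrix.det (Matrix.updateRow P (Fin.castSucc j)
              (∑ l ∈ Finset.univ.erase j, (-η l) • rows l))
            = (Matrix.detRowAlternating : (Fin (m+1) → ℝ) [⋀^Fin (m+1)]→ₗ[ℝ] ℝ).toMultilinearMap
              (Function.update P (Fin.castSucc j) (∑ l ∈ Finset.univ.erase j, (-η l) • rows l))
          from rfl, hms]
        exact Finset.sum_congr rfl fun l _ => by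
          rw [show ((Matrix.detRowAlternating :
              (Fin (m+1) → ℝ) [⋀^Fin (m+1)]→ₗ[ℝ] ℝ).toMultilinearMap)
              (Function.update P (Fin.castSucc j) ((-η l) • rows l))
            = Matrix.det (Matrix.updateRow P (Fin.castSucc j) ((-η l) • rows l)) from rfl,
            Matrix.det_updateRow_smul]
      have e3 : ∀ l ∈ Finset.univ.erase j, l ≠ k →
          Matrix.det (Matrix.updateRow P (Fin.castSucc j) (rows l)) = 0 := by
        intro l hl hlk
        have hlj : l ≠ j := Finset.ne_of_mem_erase hl
        apply Matrix.det_zero_of_row_eq (i := Fin.castSucc j) (j := Fin.castSucc l)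
        · intro h; exact hlj (Fin.castSucc_inj.mp h).symm
        · rw [Matrix.updateRow_self, Matrix.updateRow_ne, hP, Matrix.updateRow_ne, hMrow]
          · intro h; exact hlk (Fin.castSucc_inj.mp h)
          · intro h; exact hlj (Fin.castSucc_inj.mp h)
      have e5 : ∑ l ∈ Finset.univ.erase j,
            (-η l) * Matrix.det (Matrix.updateRow P (Fin.castSucc j) (rows l))
          = (-η k) * Matrix.det (Matrix.updateRow P (Fin.castSucc j) (rows k)) := by
        refine Finset.sum_eq_single k ?_ ?_
        · intro l hl hlk
          rw [e3 l hl hlk, mul_zero]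
        · intro hk
          exact absurd (Finset.mem_erase.mpr ⟨hkj, Finset.mem_univ k⟩) hk
      have e4 : Matrix.det (Matrix.updateRow P (Fin.castSucc j) (rows k))
          = - Matrix.det (Matrix.updateRow M (Fin.castSucc j) (Bk k)) := by
        set Q := Matrix.updateRow M (Fin.castSucc j) (Bk k) with hQ
        have hiden : Matrix.updateRow P (Fin.castSucc j) (rows k)
            = Q.submatrix (Equiv.swap (Fin.castSucc j) (Fin.castSucc k)) id := by
          funext i c
          rcases eq_or_ne i (Fin.castSucc j) with hij | hij
          · subst hij
            rw [Matrix.updateRow_self]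
            simp only [Matrix.submatrix_apply, Equiv.swap_apply_left, id]
            rw [hQ, Matrix.updateRow_ne (Ne.symm hckj), hMrow]
          · rcases eq_or_ne i (Fin.castSucc k) with hik | hik
            · subst hik
              rw [Matrix.updateRow_ne (Ne.symm hckj), hP, Matrix.updateRow_self]
              simp only [Matrix.submatrix_apply, Equiv.swap_apply_right, id]
              rw [hQ, Matrix.updateRow_self]
            · rw [Matrix.updateRow_ne hij, hP, Matrix.updateRow_ne hik]
              simp only [Matrix.submatrix_apply, Equiv.swap_apply_of_ne_of_ne hij hik, id]
              rw [hQ, Matrix.updateRow_ne hij]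
        rw [hiden, Matrix.det_permute, Equiv.Perm.sign_swap hckj]
        simp
      rw [e1, e2, e5, e4]
      ring
  have hBsum : η j * ∑ k, Matrix.det (Matrix.updateRow M (Fin.castSucc k) (Bk k))
      = Matrix.det (Matrix.updateRow M (Fin.castSucc j) (∑ k, η k • Bk k)) := by
    rw [Finset.mul_sum]
    rw [Finset.sum_congr rfl fun k _ => key k]
    have hms := (Matrix.detRowAlternating :
        (Fin (m+1) → ℝ) [⋀^Fin (m+1)]→ₗ[ℝ] ℝ).toMultilinearMap.map_update_sum
      (Finset.univ : Finset (Fin m)) (Fin.castSucc j) (fun k => η k • Bk k) M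
    rw [show Matrix.det (Matrix.updateRow M (Fin.castSucc j) (∑ k, η k • Bk k))
        = (Matrix.detRowAlternating : (Fin (m+1) → ℝ) [⋀^Fin (m+1)]→ₗ[ℝ] ℝ).toMultilinearMap
          (Function.update M (Fin.castSucc j) (∑ k, η k • Bk k)) from rfl, hms]
    exact Finset.sum_congr rfl fun k _ => by
      rw [show ((Matrix.detRowAlternating :
          (Fin (m+1) → ℝ) [⋀^Fin (m+1)]→ₗ[ℝ] ℝ).toMultilinearMap)
          (Function.update M (Fin.castSucc j) (η k • Bk k))
        = Matrix.det (Matrix.updateRow M (Fin.castSucc j) (η k • Bk k)) from rfl,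
        Matrix.det_updateRow_smul]
  have hB0 : Matrix.det (Matrix.updateRow M (Fin.castSucc j) (∑ k, η k • Bk k)) = 0 := by
    rw [← Matrix.exists_mulVec_eq_zero_iff]
    refine ⟨w, hwne, ?_⟩
    funext i
    have h1 : (Matrix.updateRow M (Fin.castSucc j) (∑ k, η k • Bk k) *ᵥ w) i
        = Matrix.updateRow M (Fin.castSucc j) (∑ k, η k • Bk k) i ⬝ᵥ w := rfl
    rw [h1]
    refine Fin.lastCases ?_ ?_ i
    · rw [Matrix.updateRow_ne (Fin.castSucc_lt_last j).ne', hMlast]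
      exact hwnu
    · intro l
      rcases eq_or_ne l j with hlj | hlj
      · subst hlj
        rw [Matrix.updateRow_self]
        exact hwb
      · rw [Matrix.updateRow_ne (fun h => hlj (Fin.castSucc_inj.mp h)), hMrow]
        exact hwrow l
  have hsum0 : ∑ k, Matrix.det (Matrix.updateRow M (Fin.castSucc k) (Bk k)) = 0 := by
    rw [hB0] at hBsum
    rcases mul_eq_zero.mp hBsum with h | h
    · exact absurd h hj
    · exact h
  rw [hsum0, hA, add_zero]



lemma key_limit {P AW g d : ℝ → ℝ} {β g' C : ℝ}
    (hPc : ContinuousAt P 0)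
    (hAW : HasDerivAt AW β 0) (hAW0 : AW 0 = 0)
    (hg : HasDerivAt g g' 0) (hg0 : g 0 = 0)
    (hd : HasDerivAt d 0 0) (hd0 : d 0 = 0)
    (hβ : β ≠ 0)
    (hineq : ∀ᶠ t in 𝓝[≠] (0:ℝ), |P t * AW t - g t ^ 2| ≤ C * |d t|) :
    P 0 = 0 := by
  have hAWs : Tendsto (fun t => AW t / t) (𝓝[≠] (0:ℝ)) (𝓝 β) := by
    have h := hasDerivAt_iff_tendsto_slope.mp hAW
    refine h.congr fun t => ?_
    rw [slope_def_field, hAW0, sub_zero, sub_zero]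
  have hds : Tendsto (fun t => d t / t) (𝓝[≠] (0:ℝ)) (𝓝 0) := by
    have h := hasDerivAt_iff_tendsto_slope.mp hd
    refine h.congr fun t => ?_
    rw [slope_def_field, hd0, sub_zero, sub_zero]
  have hgs : Tendsto (fun t => g t / t) (𝓝[≠] (0:ℝ)) (𝓝 g') := by
    have h := hasDerivAt_iff_tendsto_slope.mp hg
    refine h.congr fun t => ?_
    rw [slope_def_field, hg0, sub_zero, sub_zero]
  have hgc : Tendsto g (𝓝[≠] (0:ℝ)) (𝓝 0) := by
    have h := hg.continuousAt.continuousWithinAt (s := {(0:ℝ)}ᶜ)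
    unfold ContinuousWithinAt at h
    rwa [hg0] at h
  have hPc' : Tendsto P (𝓝[≠] (0:ℝ)) (𝓝 (P 0)) := hPc.continuousWithinAt
  have hlhs : Tendsto (fun t => |P t * (AW t / t)|) (𝓝[≠] (0:ℝ)) (𝓝 |P 0 * β|) :=
    (hPc'.mul hAWs).abs
  have hrhs : Tendsto (fun t => C * |d t / t| + |g t| * |g t / t|) (𝓝[≠] (0:ℝ))
      (𝓝 (C * |(0:ℝ)| + |(0:ℝ)| * |g'|)) :=
    (tendsto_const_nhds.mul hds.abs).add (hgc.abs.mul hgs.abs)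
  have hle : ∀ᶠ t in 𝓝[≠] (0:ℝ),
      |P t * (AW t / t)| ≤ C * |d t / t| + |g t| * |g t / t| := by
    filter_upwards [hineq, self_mem_nhdsWithin] with t h1 h2
    have ht0 : t ≠ 0 := h2
    have habs : (0:ℝ) < |t| := abs_pos.mpr ht0
    have h3 : |P t * AW t| ≤ C * |d t| + g t ^ 2 := by
      have hsplit : P t * AW t = (P t * AW t - g t ^ 2) + g t ^ 2 := by ring
      calc |P t * AW t| = |(P t * AW t - g t ^ 2) + g t ^ 2| := by rw [← hsplit]
        _ ≤ |P t * AW t - g t ^ 2| + |g t ^ 2| := abs_add_le _ _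
        _ = |P t * AW t - g t ^ 2| + g t ^ 2 := by rw [abs_of_nonneg (sq_nonneg (g t))]
        _ ≤ C * |d t| + g t ^ 2 := by linarith [h1]
    calc |P t * (AW t / t)| = |P t * AW t| / |t| := by
          rw [← mul_div_assoc, abs_div]
      _ ≤ (C * |d t| + g t ^ 2) / |t| := by gcongr
      _ = C * |d t / t| + |g t| * |g t / t| := by
          rw [abs_div, abs_div, add_div, mul_div_assoc, ← sq_abs (g t), sq, mul_div_assoc]
  have hfin := le_of_tendsto_of_tendsto hlhs hrhs hle
  have h0 : |P 0 * β| ≤ 0 := by simpa using hfin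
  have h1 : P 0 * β = 0 := abs_nonpos_iff.mp h0
  rcases mul_eq_zero.mp h1 with h | h
  · exact h
  · exact absurd h hβ

/-- The Jacobian function `λ(q) = det(∂_1 f, …, ∂_m f, ν)` of a frontal `(f, ν)`. -/
def lamb {m : ℕ} (f ν : (Fin m → ℝ) → (Fin (m + 1) → ℝ)) (q : Fin m → ℝ) : ℝ :=
  Matrix.det (Matrix.of (Fin.snoc (fun k : Fin m => pd k f q) (ν q)))

/-- `p` is an `A₂`-point of the frontal `(f, ν)`: a nondegenerate singular point at which
the null direction is transversal to the singular hypersurface, i.e. `dλ_p(η) ≠ 0` for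
(any) nonzero null vector `η`. -/
def IsA2 {m : ℕ} (f ν : (Fin m → ℝ) → (Fin (m + 1) → ℝ)) (p : Fin m → ℝ) : Prop :=
  lamb f ν p = 0 ∧ fderiv ℝ (lamb f ν) p ≠ 0 ∧
  ∀ X : Fin m → ℝ, X ≠ 0 → fderiv ℝ f p X = 0 → fderiv ℝ (lamb f ν) p X ≠ 0

/-- The extrinsic curvature `K^ext(X ∧ Y) = (II(X,X)II(Y,Y) − II(X,Y)²)/(I(X,X)I(Y,Y) − I(X,Y)²)`
of the plane spanned by `X, Y` at `q`, where `I(X,Y) = ⟨df X, df Y⟩` and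
`II(X,Y) = −⟨df X, dν Y⟩`. -/
def Kext {m : ℕ} (f ν : (Fin m → ℝ) → (Fin (m + 1) → ℝ)) (q : Fin m → ℝ)
    (X Y : Fin m → ℝ) : ℝ :=
  ((fderiv ℝ f q X ⬝ᵥ fderiv ℝ ν q X) * (fderiv ℝ f q Y ⬝ᵥ fderiv ℝ ν q Y)
      - (fderiv ℝ f q X ⬝ᵥ fderiv ℝ ν q Y) ^ 2) /
    ((fderiv ℝ f q X ⬝ᵥ fderiv ℝ f q X) * (fderiv ℝ f q Y ⬝ᵥ fderiv ℝ f q Y)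
      - (fderiv ℝ f q X ⬝ᵥ fderiv ℝ f q Y) ^ 2)


/-- If the extrinsic (= sectional) curvature of a front `(f, ν)` in `ℝ^{m+1}` is bounded
near an `A₂`-point `p` off the singular set, then the second fundamental form of `f`
vanishes at `p`. -/
theorem secondFundForm_eq_zero_of_bounded_Kext {m : ℕ} (hm : 2 ≤ m)
    (U : Set (Fin m → ℝ)) (hU : IsOpen U)
    (f ν : (Fin m → ℝ) → (Fin (m + 1) → ℝ))
    (hf : ContDiffOn ℝ (⊤ : ℕ∞) f U) (hν : ContDiffOn ℝ (⊤ : ℕ∞) ν U)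
    (hν1 : ∀ q ∈ U, ν q ⬝ᵥ ν q = 1)
    (htang : ∀ q ∈ U, ∀ k : Fin m, pd k f q ⬝ᵥ ν q = 0)
    (hfront : ∀ q ∈ U, ∀ X : Fin m → ℝ, fderiv ℝ f q X = 0 → fderiv ℝ ν q X = 0 → X = 0)
    (p : Fin m → ℝ) (hp : p ∈ U) (hA2 : IsA2 f ν p)
    (V : Set (Fin m → ℝ)) (hV : IsOpen V) (hpV : p ∈ V) (hVU : V ⊆ U)
    (C : ℝ) (hC : 0 < C)
    (hbdd : ∀ q ∈ V, lamb f ν q ≠ 0 → ∀ X Y : Fin m → ℝ,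
      LinearIndependent ℝ ![X, Y] → |Kext f ν q X Y| ≤ C) :
    ∀ X Y : Fin m → ℝ, fderiv ℝ f p X ⬝ᵥ fderiv ℝ ν p Y = 0 := by
  obtain ⟨hlam0, hdlamne, hA2t⟩ := hA2
  -- basic differentiability facts
  have hfd : ∀ q ∈ U, DifferentiableAt ℝ f q := fun q hq =>
    (hf.differentiableOn (by norm_num)).differentiableAt (hU.mem_nhds hq)
  have hνd : ∀ q ∈ U, DifferentiableAt ℝ ν q := fun q hq =>
    (hν.differentiableOn (by norm_num)).differentiableAt (hU.mem_nhds hq)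
  have hf1 : ContDiffOn ℝ (⊤ : ℕ∞) (fderiv ℝ f) U := hf.fderiv_of_isOpen hU (by simp)
  have hν1' : ContDiffOn ℝ (⊤ : ℕ∞) (fderiv ℝ ν) U := hν.fderiv_of_isOpen hU (by simp)
  have hDfd : ∀ q ∈ U, DifferentiableAt ℝ (fderiv ℝ f) q := fun q hq =>
    (hf1.differentiableOn (by simp)).differentiableAt (hU.mem_nhds hq)
  have hDνd : ∀ q ∈ U, DifferentiableAt ℝ (fderiv ℝ ν) q := fun q hq =>
    (hν1'.differentiableOn (by simp)).differentiableAt (hU.mem_nhds hq)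
  -- eventual membership along lines
  have hq0 : ∀ Y : Fin m → ℝ, p + (0:ℝ) • Y = p := fun Y => by simp
  have hmem : ∀ (S : Set (Fin m → ℝ)), IsOpen S → p ∈ S → ∀ Y : Fin m → ℝ,
      ∀ᶠ t : ℝ in 𝓝 (0:ℝ), p + t • Y ∈ S := by
    intro S hS hpS Y
    have hc : Continuous fun t : ℝ => p + t • Y := continuous_const.add (continuous_id.smul continuous_const)
    have h1 : S ∈ 𝓝 ((fun t : ℝ => p + t • Y) 0) := by
      rw [show (fun t : ℝ => p + t • Y) 0 = p from hq0 Y]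
      exact hS.mem_nhds hpS
    exact hc.continuousAt.preimage_mem_nhds h1
  -- construction of the null direction η
  obtain ⟨v, hv0, hvM⟩ : ∃ v, v ≠ 0 ∧
      v ᵥ* (Matrix.of (Fin.snoc (fun k => pd k f p) (ν p))) = 0 :=
    Matrix.exists_vecMul_eq_zero_iff.mpr hlam0
  have hrelv : ∑ i, v i • (Fin.snoc (fun k => pd k f p) (ν p) : Fin (m+1) → Fin (m+1) → ℝ) i
      = 0 := by
    funext c
    have h1 := congrFun hvM c
    have h2 : (v ᵥ* (Matrix.of (Fin.snoc (fun k => pd k f p) (ν p)))) c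
        = ∑ i, v i * (Fin.snoc (fun k => pd k f p) (ν p) : Fin (m+1) → Fin (m+1) → ℝ) i c := by
      simp [Matrix.vecMul, dotProduct]
    rw [h2] at h1
    simpa [Finset.sum_apply, smul_eq_mul] using h1
  have hvlast : v (Fin.last m) = 0 := by
    have h1 : (∑ i, v i • (Fin.snoc (fun k => pd k f p) (ν p) : Fin (m+1) → Fin (m+1) → ℝ) i)
        ⬝ᵥ ν p = 0 := by rw [hrelv]; exact zero_dotProduct _
    rw [sum_dotProduct'] at h1
    have h2 : ∀ i, (v i • (Fin.snoc (fun k => pd k f p) (ν p) : Fin (m+1) → Fin (m+1) → ℝ) i)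
        ⬝ᵥ ν p = v i * ((Fin.snoc (fun k => pd k f p) (ν p) : Fin (m+1) → Fin (m+1) → ℝ) i ⬝ᵥ ν p) := by
      intro i; rw [smul_dotProduct]; rfl
    simp only [h2] at h1
    rw [Fin.sum_univ_castSucc] at h1
    simpa [Fin.snoc_castSucc, Fin.snoc_last, htang p hp, hν1 p hp] using h1
  set η : Fin m → ℝ := fun k => v (Fin.castSucc k) with hηdef
  have hηne : η ≠ 0 := by
    intro h
    apply hv0
    funext i
    refine Fin.lastCases ?_ ?_ i
    · exact hvlast
    · intro k; exact congrFun h k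
  have hrelη : ∑ k, η k • pd k f p = 0 := by
    have h0 := hrelv
    rw [Fin.sum_univ_castSucc] at h0
    simpa [Fin.snoc_castSucc, Fin.snoc_last, hvlast] using h0
  have hdfη : fderiv ℝ f p η = 0 := by
    rw [clm_apply_eq_sum]
    exact hrelη
  -- symmetry of the second fundamental form at p
  have hBval : ∀ X Y : Fin m → ℝ, fderiv ℝ f p X ⬝ᵥ fderiv ℝ ν p Y
      = -(fderiv ℝ (fderiv ℝ f) p Y X ⬝ᵥ ν p) := by
    intro X Y
    have hF : HasDerivAt (fun t : ℝ => fderiv ℝ f (p + t • Y) X)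
        (fderiv ℝ (fderiv ℝ f) p Y X) 0 := by
      have h1 : HasDerivAt (fun t : ℝ => fderiv ℝ f (p + t • Y))
          (fderiv ℝ (fderiv ℝ f) p Y) 0 := hasDerivAt_line (hDfd p hp)
      simpa using h1.clm_apply (hasDerivAt_const 0 X)
    have hG : HasDerivAt (fun t : ℝ => ν (p + t • Y)) (fderiv ℝ ν p Y) 0 :=
      hasDerivAt_line (hνd p hp)
    have hFG := hasDerivAt_dotProduct hF hG
    have hzero : (fun t : ℝ => fderiv ℝ f (p + t • Y) X ⬝ᵥ ν (p + t • Y))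
        =ᶠ[𝓝 (0:ℝ)] fun _ => (0:ℝ) := by
      filter_upwards [hmem U hU hp Y] with t ht
      rw [clm_apply_eq_sum, sum_dotProduct']
      have : ∀ k : Fin m, (X k • fderiv ℝ f (p + t • Y) (Pi.single k 1)) ⬝ᵥ ν (p + t • Y)
          = X k * (pd k f (p + t • Y) ⬝ᵥ ν (p + t • Y)) := by
        intro k; rw [smul_dotProduct]; rfl
      simp only [this, htang _ ht, mul_zero, Finset.sum_const_zero]
    have h0d : HasDerivAt (fun _ : ℝ => (0:ℝ))
        (fderiv ℝ (fderiv ℝ f) p Y X ⬝ᵥ ν (p + (0:ℝ) • Y)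
          + fderiv ℝ f (p + (0:ℝ) • Y) X ⬝ᵥ fderiv ℝ ν p Y) 0 :=
      hFG.congr_of_eventuallyEq hzero.symm
    have hu := h0d.unique (hasDerivAt_const 0 0)
    rw [hq0 Y] at hu
    linarith [hu]
  have hsecond : IsSymmSndFDerivAt ℝ f p :=
    (hf.contDiffAt (hU.mem_nhds hp)).isSymmSndFDerivAt (by simp; exact (WithTop.coe_le_coe.mpr (le_top : (2:ℕ∞) ≤ ⊤) : ((2:ℕ∞) : WithTop ℕ∞) ≤ ((⊤:ℕ∞) : WithTop ℕ∞)))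
  have hsymmB : ∀ X Y : Fin m → ℝ,
      fderiv ℝ f p X ⬝ᵥ fderiv ℝ ν p Y = fderiv ℝ f p Y ⬝ᵥ fderiv ℝ ν p X := by
    intro X Y
    rw [hBval X Y, hBval Y X, hsecond.eq Y X]
  -- the vector w
  have hwne : fderiv ℝ ν p η ≠ 0 := fun h => hηne (hfront p hp η hdfη h)
  have hrow_w : ∀ k, pd k f p ⬝ᵥ fderiv ℝ ν p η = 0 := by
    intro k
    have h1 := hsymmB (Pi.single k 1) η
    rw [hdfη, zero_dotProduct] at h1
    exact h1
  have hνp_w : ν p ⬝ᵥ fderiv ℝ ν p η = 0 := by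
    have hG : HasDerivAt (fun t : ℝ => ν (p + t • η)) (fderiv ℝ ν p η) 0 :=
      hasDerivAt_line (hνd p hp)
    have hdd := hasDerivAt_dotProduct hG hG
    have hone : (fun t : ℝ => ν (p + t • η) ⬝ᵥ ν (p + t • η)) =ᶠ[𝓝 (0:ℝ)] fun _ => (1:ℝ) := by
      filter_upwards [hmem U hU hp η] with t ht
      exact hν1 _ ht
    have h0d := hdd.congr_of_eventuallyEq hone.symm
    have hu := h0d.unique (hasDerivAt_const 0 1)
    rw [hq0 η] at hu
    rw [dotProduct_comm] at hu
    linarith [hu]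
  -- differentiability of lamb at p
  have hlambeq : lamb f ν = fun q =>
      detCM (m+1) (Fin.snoc (fun k => pd k f q) (ν q)) := rfl
  have hRdiff : DifferentiableAt ℝ
      (fun q => (Fin.snoc (fun k => pd k f q) (ν q) : Fin (m+1) → Fin (m+1) → ℝ)) p := by
    rw [differentiableAt_pi]
    intro i
    refine Fin.lastCases ?_ ?_ i
    · have he : (fun q => (Fin.snoc (fun k => pd k f q) (ν q) : Fin (m+1) → Fin (m+1) → ℝ)
          (Fin.last m)) = ν := by
        funext q; simp
      rw [he]; exact hνd p hp
    · intro k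
      have he : (fun q => (Fin.snoc (fun k => pd k f q) (ν q) : Fin (m+1) → Fin (m+1) → ℝ)
          (Fin.castSucc k)) = fun q => fderiv ℝ f q (Pi.single k 1) := by
        funext q; simp [pd]
      rw [he]
      exact (hDfd p hp).clm_apply (differentiableAt_const _)
  have hlamdiffAt : DifferentiableAt ℝ (lamb f ν) p := by
    rw [hlambeq]
    exact (((detCM (m+1)).hasFDerivAt _).comp p hRdiff.hasFDerivAt).differentiableAt
  have hlamline : HasDerivAt (fun t : ℝ => lamb f ν (p + t • η)) (fderiv ℝ (lamb f ν) p η) 0 :=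
    hasDerivAt_line hlamdiffAt
  have hdlam_eta : fderiv ℝ (lamb f ν) p η ≠ 0 := hA2t η hηne hdfη
  -- explicit formula for the derivative of lamb along the η-line
  have hSline : HasDerivAt (fun t : ℝ =>
        (Fin.snoc (fun k => pd k f (p + t • η)) (ν (p + t • η)) : Fin (m+1) → Fin (m+1) → ℝ))
      (Fin.snoc (fun k => fderiv ℝ (fderiv ℝ f) p η (Pi.single k 1)) (fderiv ℝ ν p η)) 0 := by
    rw [hasDerivAt_pi]
    intro i
    refine Fin.lastCases ?_ ?_ i
    · simp only [Fin.snoc_last]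
      exact hasDerivAt_line (hνd p hp)
    · intro k
      simp only [Fin.snoc_castSucc]
      have h1 : HasDerivAt (fun t : ℝ => fderiv ℝ f (p + t • η))
          (fderiv ℝ (fderiv ℝ f) p η) 0 := hasDerivAt_line (hDfd p hp)
      simpa [pd] using h1.clm_apply (hasDerivAt_const 0 (Pi.single k 1))
  have hlamline2 : HasDerivAt (fun t : ℝ => lamb f ν (p + t • η))
      ((detCM (m+1)).linearDeriv (Fin.snoc (fun k => pd k f p) (ν p))
        (Fin.snoc (fun k => fderiv ℝ (fderiv ℝ f) p η (Pi.single k 1)) (fderiv ℝ ν p η))) 0 := by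
    have hdet : HasFDerivAt (detCM (m+1))
        ((detCM (m+1)).linearDeriv (Fin.snoc (fun k => pd k f p) (ν p)))
        ((fun t : ℝ =>
          (Fin.snoc (fun k => pd k f (p + t • η)) (ν (p + t • η))
            : Fin (m+1) → Fin (m+1) → ℝ)) 0) := by
      have h0 : (fun t : ℝ =>
          (Fin.snoc (fun k => pd k f (p + t • η)) (ν (p + t • η))
            : Fin (m+1) → Fin (m+1) → ℝ)) 0 = Fin.snoc (fun k => pd k f p) (ν p) := by
        funext i
        simp only [hq0 η]
      rw [h0]
      exact (detCM (m+1)).hasFDerivAt _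
    exact hdet.comp_hasDerivAt 0 hSline
  have hdlamval : fderiv ℝ (lamb f ν) p η
      = ∑ i, detCM (m+1) (Function.update (Fin.snoc (fun k => pd k f p) (ν p)) i
          ((Fin.snoc (fun k => fderiv ℝ (fderiv ℝ f) p η (Pi.single k 1)) (fderiv ℝ ν p η)
            : Fin (m+1) → Fin (m+1) → ℝ) i)) := by
    rw [hlamline.unique hlamline2]
    exact (detCM (m+1)).linearDeriv_apply _ _
  -- step 4 : b ⬝ᵥ w ≠ 0
  have hbw : fderiv ℝ (fderiv ℝ f) p η η ⬝ᵥ fderiv ℝ ν p η ≠ 0 := by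
    intro hbw0
    apply hdlam_eta
    rw [hdlamval]
    obtain ⟨j, hj⟩ : ∃ j, η j ≠ 0 := by
      by_contra h
      push_neg at h
      exact hηne (funext h)
    have h1 := det_update_sum_eq_zero (fun k => pd k f p) (ν p) η
      (fun k => fderiv ℝ (fderiv ℝ f) p η (Pi.single k 1)) (fderiv ℝ ν p η)
      hrelη j hj hrow_w hνp_w
      (by rw [← clm_apply_eq_sum]; exact hbw0) hwne
    rw [Fin.sum_univ_castSucc]
    simp only [Fin.snoc_castSucc, Fin.snoc_last, detCM_update]
    exact h1
  -- eventual facts along the η-line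
  have hVev : ∀ᶠ t : ℝ in 𝓝[≠] (0:ℝ), p + t • η ∈ V :=
    (hmem V hV hpV η).filter_mono nhdsWithin_le_nhds
  have hlamne : ∀ᶠ t : ℝ in 𝓝[≠] (0:ℝ), lamb f ν (p + t • η) ≠ 0 := by
    have hs := hasDerivAt_iff_tendsto_slope.mp hlamline
    have hne := hs.eventually_ne hdlam_eta
    filter_upwards [hne, self_mem_nhdsWithin] with t h1 h2
    intro h0
    apply h1
    simp [slope_def_field, h0, hq0 η, hlam0]
  -- step 5 : the quadratic form vanishes on vectors independent from η
  have hquad : ∀ Z : Fin m → ℝ, LinearIndependent ℝ ![Z, η] →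
      fderiv ℝ f p Z ⬝ᵥ fderiv ℝ ν p Z = 0 := by
    intro Z hZind
    have hZpair := LinearIndependent.pair_iff.mp hZind
    have hZne : Z ≠ 0 := by
      intro h
      have := (hZpair 1 0 (by simp [h])).1
      norm_num at this
    have hdf_line : HasDerivAt (fun t : ℝ => fderiv ℝ f (p + t • η))
        (fderiv ℝ (fderiv ℝ f) p η) 0 := hasDerivAt_line (hDfd p hp)
    have hdν_line : HasDerivAt (fun t : ℝ => fderiv ℝ ν (p + t • η))
        (fderiv ℝ (fderiv ℝ ν) p η) 0 := hasDerivAt_line (hDνd p hp)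
    have hAd : HasDerivAt (fun t : ℝ => fderiv ℝ f (p + t • η) η)
        (fderiv ℝ (fderiv ℝ f) p η η) 0 := by
      simpa using hdf_line.clm_apply (hasDerivAt_const 0 η)
    have hWd : HasDerivAt (fun t : ℝ => fderiv ℝ ν (p + t • η) η)
        (fderiv ℝ (fderiv ℝ ν) p η η) 0 := by
      simpa using hdν_line.clm_apply (hasDerivAt_const 0 η)
    have hFxd : HasDerivAt (fun t : ℝ => fderiv ℝ f (p + t • η) Z)
        (fderiv ℝ (fderiv ℝ f) p η Z) 0 := by
      simpa using hdf_line.clm_apply (hasDerivAt_const 0 Z)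
    have hNxd : HasDerivAt (fun t : ℝ => fderiv ℝ ν (p + t • η) Z)
        (fderiv ℝ (fderiv ℝ ν) p η Z) 0 := by
      simpa using hdν_line.clm_apply (hasDerivAt_const 0 Z)
    have hPc : ContinuousAt
        (fun t : ℝ => fderiv ℝ f (p + t • η) Z ⬝ᵥ fderiv ℝ ν (p + t • η) Z) 0 :=
      (hasDerivAt_dotProduct hFxd hNxd).continuousAt
    have hAWd : HasDerivAt
        (fun t : ℝ => fderiv ℝ f (p + t • η) η ⬝ᵥ fderiv ℝ ν (p + t • η) η)
        (fderiv ℝ (fderiv ℝ f) p η η ⬝ᵥ fderiv ℝ ν p η) 0 := by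
      have h := hasDerivAt_dotProduct hAd hWd
      convert h using 1
      simp [hdfη]
    have hAW0 : (fun t : ℝ => fderiv ℝ f (p + t • η) η ⬝ᵥ fderiv ℝ ν (p + t • η) η) 0
        = 0 := by
      simp [hdfη]
    have hg00 : (fun t : ℝ => fderiv ℝ f (p + t • η) Z ⬝ᵥ fderiv ℝ ν (p + t • η) η) 0
        = 0 := by
      have h : fderiv ℝ f p Z ⬝ᵥ fderiv ℝ ν p η = 0 := by
        rw [hsymmB Z η, hdfη, zero_dotProduct]
      simpa using h
    have hdd : HasDerivAt (fun t : ℝ =>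
        (fderiv ℝ f (p + t • η) Z ⬝ᵥ fderiv ℝ f (p + t • η) Z)
          * (fderiv ℝ f (p + t • η) η ⬝ᵥ fderiv ℝ f (p + t • η) η)
        - (fderiv ℝ f (p + t • η) Z ⬝ᵥ fderiv ℝ f (p + t • η) η) ^ 2) 0 0 := by
      have hu := hasDerivAt_dotProduct hFxd hFxd
      have hv := hasDerivAt_dotProduct hAd hAd
      have hs := hasDerivAt_dotProduct hFxd hAd
      have h := (hu.mul hv).sub (hs.pow 2)
      refine h.congr_deriv ?_
      simp [hdfη]
    have hd00 : (fun t : ℝ =>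
        (fderiv ℝ f (p + t • η) Z ⬝ᵥ fderiv ℝ f (p + t • η) Z)
          * (fderiv ℝ f (p + t • η) η ⬝ᵥ fderiv ℝ f (p + t • η) η)
        - (fderiv ℝ f (p + t • η) Z ⬝ᵥ fderiv ℝ f (p + t • η) η) ^ 2) 0 = 0 := by
      simp [hdfη]
    have hineq : ∀ᶠ t : ℝ in 𝓝[≠] (0:ℝ),
        |(fderiv ℝ f (p + t • η) Z ⬝ᵥ fderiv ℝ ν (p + t • η) Z)
            * (fderiv ℝ f (p + t • η) η ⬝ᵥ fderiv ℝ ν (p + t • η) η)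
          - (fderiv ℝ f (p + t • η) Z ⬝ᵥ fderiv ℝ ν (p + t • η) η) ^ 2|
        ≤ C * |(fderiv ℝ f (p + t • η) Z ⬝ᵥ fderiv ℝ f (p + t • η) Z)
            * (fderiv ℝ f (p + t • η) η ⬝ᵥ fderiv ℝ f (p + t • η) η)
          - (fderiv ℝ f (p + t • η) Z ⬝ᵥ fderiv ℝ f (p + t • η) η) ^ 2| := by
      filter_upwards [hVev, hlamne] with t htV htlam
      have hKb := hbdd (p + t • η) htV htlam Z η hZind
      have hinj : ∀ Yv : Fin m → ℝ, fderiv ℝ f (p + t • η) Yv = 0 → Yv = 0 := by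
        intro Yv hYv
        by_contra hYne
        apply htlam
        show Matrix.det (Matrix.of
          (Fin.snoc (fun k => pd k f (p + t • η)) (ν (p + t • η)))) = 0
        apply Matrix.exists_vecMul_eq_zero_iff.mp
        refine ⟨Fin.snoc Yv 0, ?_, ?_⟩
        · intro h
          apply hYne
          funext k
          have := congrFun h (Fin.castSucc k)
          simpa using this
        · funext c
          have h1 : (Fin.snoc Yv 0 ᵥ* Matrix.of
              (Fin.snoc (fun k => pd k f (p + t • η)) (ν (p + t • η)))) c
              = ∑ i, (Fin.snoc Yv 0 : Fin (m+1) → ℝ) i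
                * (Fin.snoc (fun k => pd k f (p + t • η)) (ν (p + t • η))
                    : Fin (m+1) → Fin (m+1) → ℝ) i c := by
            simp [Matrix.vecMul, dotProduct]
          rw [h1, Fin.sum_univ_castSucc]
          simp only [Fin.snoc_castSucc, Fin.snoc_last, zero_mul, add_zero]
          have h2 : fderiv ℝ f (p + t • η) Yv c = 0 := by rw [hYv]; rfl
          rw [clm_apply_eq_sum] at h2
          simpa [Finset.sum_apply, smul_eq_mul, pd] using h2
      have hu0 : fderiv ℝ f (p + t • η) Z ≠ 0 := fun h => hZne (hinj Z h)
      have hpair : ∀ c d' : ℝ,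
          c • fderiv ℝ f (p + t • η) Z + d' • fderiv ℝ f (p + t • η) η = 0 →
          c = 0 ∧ d' = 0 := by
        intro c d' hcd
        have h1 : fderiv ℝ f (p + t • η) (c • Z + d' • η) = 0 := by
          rw [map_add, map_smul, map_smul]; exact hcd
        exact hZpair c d' (hinj _ h1)
      have hdne := denom_ne_zero hu0 hpair
      have hKdef : Kext f ν (p + t • η) Z η
          = ((fderiv ℝ f (p + t • η) Z ⬝ᵥ fderiv ℝ ν (p + t • η) Z)
              * (fderiv ℝ f (p + t • η) η ⬝ᵥ fderiv ℝ ν (p + t • η) η)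
            - (fderiv ℝ f (p + t • η) Z ⬝ᵥ fderiv ℝ ν (p + t • η) η) ^ 2)
          / ((fderiv ℝ f (p + t • η) Z ⬝ᵥ fderiv ℝ f (p + t • η) Z)
              * (fderiv ℝ f (p + t • η) η ⬝ᵥ fderiv ℝ f (p + t • η) η)
            - (fderiv ℝ f (p + t • η) Z ⬝ᵥ fderiv ℝ f (p + t • η) η) ^ 2) := rfl
      have hnum : (fderiv ℝ f (p + t • η) Z ⬝ᵥ fderiv ℝ ν (p + t • η) Z)
            * (fderiv ℝ f (p + t • η) η ⬝ᵥ fderiv ℝ ν (p + t • η) η)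
          - (fderiv ℝ f (p + t • η) Z ⬝ᵥ fderiv ℝ ν (p + t • η) η) ^ 2
          = Kext f ν (p + t • η) Z η
            * ((fderiv ℝ f (p + t • η) Z ⬝ᵥ fderiv ℝ f (p + t • η) Z)
              * (fderiv ℝ f (p + t • η) η ⬝ᵥ fderiv ℝ f (p + t • η) η)
            - (fderiv ℝ f (p + t • η) Z ⬝ᵥ fderiv ℝ f (p + t • η) η) ^ 2) := by
        rw [hKdef, div_mul_cancel₀ _ hdne]
      rw [hnum, abs_mul]
      exact mul_le_mul_of_nonneg_right hKb (abs_nonneg _)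
    have hkey := key_limit hPc hAWd hAW0 (hasDerivAt_dotProduct hFxd hWd) hg00
      hdd hd00 hbw hineq
    simpa using hkey
  -- the quadratic form vanishes identically
  have hBsq : ∀ Z : Fin m → ℝ, fderiv ℝ f p Z ⬝ᵥ fderiv ℝ ν p Z = 0 := by
    intro Z
    by_cases hind : LinearIndependent ℝ ![Z, η]
    · exact hquad Z hind
    · rw [LinearIndependent.pair_iff] at hind
      push_neg at hind
      obtain ⟨c, dd, hcd, hne⟩ := hind
      by_cases hc : c = 0
      · subst hc
        have hdd0 : dd ≠ 0 := hne rfl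
        have h0 : dd • η = 0 := by simpa using hcd
        rcases smul_eq_zero.mp h0 with h | h
        · exact absurd h hdd0
        · exact absurd h hηne
      · have hZval : fderiv ℝ f p Z = 0 := by
          have h1 : c • Z = -(dd • η) := eq_neg_of_add_eq_zero_left hcd
          have h2 : Z = c⁻¹ • -(dd • η) := by
            rw [← h1, smul_smul, inv_mul_cancel₀ hc, one_smul]
          rw [h2, map_smul, map_neg, map_smul, hdfη, smul_zero, neg_zero, smul_zero]
        rw [hZval, zero_dotProduct]
  -- polarization
  intro X Y
  have h1 := hBsq (X + Y)
  have h2 := hBsq X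
  have h3 := hBsq Y
  have hexp : fderiv ℝ f p (X + Y) ⬝ᵥ fderiv ℝ ν p (X + Y)
      = fderiv ℝ f p X ⬝ᵥ fderiv ℝ ν p X + fderiv ℝ f p X ⬝ᵥ fderiv ℝ ν p Y
        + fderiv ℝ f p Y ⬝ᵥ fderiv ℝ ν p X + fderiv ℝ f p Y ⬝ᵥ fderiv ℝ ν p Y := by
    rw [map_add, map_add, add_dotProduct, dotProduct_add, dotProduct_add]
    ring
  have h4 := hsymmB X Y
  rw [hexp, h2, h3] at h1
  linarith
end
end
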